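/- Let (X, d) be a metric space, and let γ₁ : [0,1] → X be a geodesic from x₁ to x₂ and γ₂ : [0,1] → X a geodesic from y₁ to y₂ (paths whose d-length equals the distance between their endpoints). Suppose t₁ ≤ t₂ in [0,1] and s₁, s₂ ∈ [0,1] satisfy γ₁(t₁) = γ₂(s₁) and γ₁(t₂) = γ₂(s₂). Then the concatenation γ̃₁ := γ₁|[0,t₁] * γ₂|[s₁,s₂] * γ₁|[t₂,1] (suitably reparametrized if s₁ > s₂, traversing γ₂ backwards) is also a geodesic from x₁ to x₂, i.e. its d-length equals d(x₁, x₂). -/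

import Mathlib

private lemma mono_aff (p : ℝ) {q : ℝ} (hq : 0 ≤ q) : Monotone (fun u : ℝ => p + u * q) :=
  fun x y h => by dsimp only; nlinarith [mul_le_mul_of_nonneg_right h hq]

private lemma anti_aff (p : ℝ) {q : ℝ} (hq : q ≤ 0) : Antitone (fun u : ℝ => p + u * q) :=
  fun x y h => by dsimp only; nlinarith [mul_le_mul_of_nonpos_right h hq]

private lemma image_aff (p : ℝ) {q a b : ℝ} (hq : 0 ≤ q) (hab : a ≤ b) :
    (fun u : ℝ => p + u * q) '' Set.Icc a b = Set.Icc (p + a * q) (p + b * q) := by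
  rw [show (fun u : ℝ => p + u * q) = (fun x : ℝ => p + x) ∘ (fun u : ℝ => u * q) from rfl,
    Set.image_comp, Set.image_mul_right_Icc hab hq, Set.image_const_add_Icc]

private lemma image_aff_neg (p : ℝ) {q a b : ℝ} (hq : q ≤ 0) (hab : a ≤ b) :
    (fun u : ℝ => p + u * q) '' Set.Icc a b = Set.Icc (p + b * q) (p + a * q) := by
  have h : (fun u : ℝ => p + u * q) = (fun v : ℝ => p + v * (-q)) ∘ Neg.neg := by
    funext u; simp only [Function.comp_apply]; ring
  rw [h, Set.image_comp, Set.image_neg_Icc,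
    image_aff p (neg_nonneg.2 hq) (neg_le_neg hab)]
  congr 1 <;> ring

private lemma split_var {X : Type*} [MetricSpace X] (f : ℝ → X) {x y z : ℝ}
    (hxy : x ≤ y) (hyz : y ≤ z) :
    eVariationOn f (Set.Icc x y) + eVariationOn f (Set.Icc y z)
      = eVariationOn f (Set.Icc x z) := by
  simpa using eVariationOn.Icc_add_Icc f (s := Set.univ) hxy hyz (Set.mem_univ y)

private lemma subgeo {X : Type*} [MetricSpace X] (f : ℝ → X)
    (hg : eVariationOn f (Set.Icc 0 1) = edist (f 0) (f 1))
    {a b : ℝ} (ha : a ∈ Set.Icc (0:ℝ) 1) (hb : b ∈ Set.Icc (0:ℝ) 1) (hab : a ≤ b) :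
    eVariationOn f (Set.Icc a b) = edist (f a) (f b) := by
  set A := eVariationOn f (Set.Icc 0 a) with hA
  set B := eVariationOn f (Set.Icc a b) with hB
  set C := eVariationOn f (Set.Icc b 1) with hC
  have h1 : A + B + C = edist (f 0) (f 1) := by
    rw [hA, hB, hC, split_var f ha.1 hab, split_var f (ha.1.trans hab) hb.2, hg]
  have hA' : edist (f 0) (f a) ≤ A := eVariationOn.edist_le f ⟨le_rfl, ha.1⟩ ⟨ha.1, le_rfl⟩
  have hB' : edist (f a) (f b) ≤ B := eVariationOn.edist_le f ⟨le_rfl, hab⟩ ⟨hab, le_rfl⟩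
  have hC' : edist (f b) (f 1) ≤ C := eVariationOn.edist_le f ⟨le_rfl, hb.2⟩ ⟨hb.2, le_rfl⟩
  have htop : A + B + C ≠ ⊤ := by rw [h1]; exact edist_ne_top _ _
  have hAt : A ≠ ⊤ := ne_top_of_le_ne_top htop (le_self_add.trans le_self_add)
  have hCt : C ≠ ⊤ := ne_top_of_le_ne_top htop le_add_self
  refine le_antisymm ?_ hB'
  have key : A + C + B ≤ A + C + edist (f a) (f b) := by
    calc A + C + B = A + B + C := by ring
      _ = edist (f 0) (f 1) := h1
      _ ≤ edist (f 0) (f a) + edist (f a) (f b) + edist (f b) (f 1) :=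
          edist_triangle4 _ _ _ _
      _ ≤ A + edist (f a) (f b) + C := add_le_add (add_le_add hA' le_rfl) hC'
      _ = A + C + edist (f a) (f b) := by ring
  exact ENNReal.le_of_add_le_add_left (ENNReal.add_ne_top.2 ⟨hAt, hCt⟩) key

private lemma contOn_union {X Y : Type*} [TopologicalSpace X] [TopologicalSpace Y]
    {f : X → Y} {s t : Set X} (hs : IsClosed s) (ht : IsClosed t)
    (hfs : ContinuousOn f s) (hft : ContinuousOn f t) : ContinuousOn f (s ∪ t) := by
  intro x hx
  apply ContinuousWithinAt.union
  · by_cases h : x ∈ s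
    · exact hfs x h
    · exact continuousWithinAt_of_notMem_closure (by rwa [hs.closure_eq])
  · by_cases h : x ∈ t
    · exact hft x h
    · exact continuousWithinAt_of_notMem_closure (by rwa [ht.closure_eq])

/-- The reparametrized concatenation `γ₁|[0,t₁] * γ₂|[s₁,s₂] * γ₁|[t₂,1]`. -/
noncomputable def concatGeo {X : Type*} (γ₁ γ₂ : ℝ → X) (t₁ t₂ s₁ s₂ : ℝ) : ℝ → X :=
  fun u =>
    if u ≤ 1/3 then γ₁ (3 * u * t₁)
    else if u ≤ 2/3 then γ₂ (s₁ + (3 * u - 1) * (s₂ - s₁))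
    else γ₁ (t₂ + (3 * u - 2) * (1 - t₂))

/-- If `γ₁, γ₂` are geodesics and `γ₁ t₁ = γ₂ s₁`, `γ₁ t₂ = γ₂ s₂` with `t₁ ≤ t₂`,
then the concatenation `γ₁|[0,t₁] * γ₂|[s₁,s₂] * γ₁|[t₂,1]` is again a geodesic from
`x₁` to `x₂`. -/
theorem concat_of_geodesics_is_geodesic {X : Type*} [MetricSpace X]
    (γ₁ γ₂ : ℝ → X) (x₁ x₂ y₁ y₂ : X) (t₁ t₂ s₁ s₂ : ℝ)
    (h1c : ContinuousOn γ₁ (Set.Icc 0 1)) (h10 : γ₁ 0 = x₁) (h11 : γ₁ 1 = x₂)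
    (h1g : eVariationOn γ₁ (Set.Icc 0 1) = edist x₁ x₂)
    (h2c : ContinuousOn γ₂ (Set.Icc 0 1)) (h20 : γ₂ 0 = y₁) (h21 : γ₂ 1 = y₂)
    (h2g : eVariationOn γ₂ (Set.Icc 0 1) = edist y₁ y₂)
    (ht₁ : t₁ ∈ Set.Icc (0:ℝ) 1) (ht₂ : t₂ ∈ Set.Icc (0:ℝ) 1) (ht : t₁ ≤ t₂)
    (hs₁ : s₁ ∈ Set.Icc (0:ℝ) 1) (hs₂ : s₂ ∈ Set.Icc (0:ℝ) 1)
    (he₁ : γ₁ t₁ = γ₂ s₁) (he₂ : γ₁ t₂ = γ₂ s₂) :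
    ContinuousOn (concatGeo γ₁ γ₂ t₁ t₂ s₁ s₂) (Set.Icc 0 1) ∧
    concatGeo γ₁ γ₂ t₁ t₂ s₁ s₂ 0 = x₁ ∧
    concatGeo γ₁ γ₂ t₁ t₂ s₁ s₂ 1 = x₂ ∧
    eVariationOn (concatGeo γ₁ γ₂ t₁ t₂ s₁ s₂) (Set.Icc 0 1) = edist x₁ x₂ := by
  set c := concatGeo γ₁ γ₂ t₁ t₂ s₁ s₂ with hc
  -- the three affine reparametrizations
  have E₁ : Set.EqOn c (γ₁ ∘ fun u : ℝ => 0 + u * (3 * t₁)) (Set.Icc 0 (1/3)) := by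
    intro u hu
    simp only [hc, concatGeo, Function.comp_apply, if_pos hu.2]
    congr 1; ring
  have E₂ : Set.EqOn c (γ₂ ∘ fun u : ℝ => (2*s₁ - s₂) + u * (3 * (s₂ - s₁)))
      (Set.Icc (1/3) (2/3)) := by
    intro u hu
    simp only [hc, concatGeo, Function.comp_apply]
    rcases eq_or_lt_of_le hu.1 with h | h
    · rw [← h, if_pos le_rfl]
      have a1 : 3 * (1/3 : ℝ) * t₁ = t₁ := by norm_num
      have a2 : (2*s₁ - s₂) + (1/3 : ℝ) * (3 * (s₂ - s₁)) = s₁ := by ring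
      rw [a1, a2, he₁]
    · rw [if_neg (by linarith), if_pos hu.2]
      congr 1; ring
  have E₃ : Set.EqOn c (γ₁ ∘ fun u : ℝ => (3*t₂ - 2) + u * (3 * (1 - t₂)))
      (Set.Icc (2/3) 1) := by
    intro u hu
    simp only [hc, concatGeo, Function.comp_apply]
    rw [if_neg (by linarith [hu.1])]
    rcases eq_or_lt_of_le hu.1 with h | h
    · rw [← h, if_pos le_rfl]
      have a1 : s₁ + (3 * (2/3 : ℝ) - 1) * (s₂ - s₁) = s₂ := by ring
      have a2 : (3*t₂ - 2) + (2/3 : ℝ) * (3 * (1 - t₂)) = t₂ := by ring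
      rw [a1, a2, ← he₂]
    · rw [if_neg (by linarith)]
      congr 1; ring
  have q₁ : (0:ℝ) ≤ 3 * t₁ := by linarith [ht₁.1]
  have q₃ : (0:ℝ) ≤ 3 * (1 - t₂) := by linarith [ht₂.2]
  have img₁ : (fun u : ℝ => 0 + u * (3 * t₁)) '' Set.Icc 0 (1/3) = Set.Icc 0 t₁ := by
    rw [image_aff _ q₁ (by norm_num)]; congr 1 <;> ring
  have img₃ : (fun u : ℝ => (3*t₂ - 2) + u * (3 * (1 - t₂))) '' Set.Icc (2/3) 1
      = Set.Icc t₂ 1 := by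
    rw [image_aff _ q₃ (by norm_num)]; congr 1 <;> ring
  -- continuity
  have c₁ : ContinuousOn c (Set.Icc 0 (1/3)) := by
    refine (h1c.comp (by fun_prop) ?_).congr E₁
    rw [Set.mapsTo_iff_image_subset, img₁]
    exact Set.Icc_subset_Icc le_rfl ht₁.2
  have c₂ : ContinuousOn c (Set.Icc (1/3) (2/3)) := by
    refine (h2c.comp (by fun_prop) ?_).congr E₂
    rw [Set.mapsTo_iff_image_subset]
    rcases le_total s₁ s₂ with hss | hss
    · rw [image_aff _ (by linarith) (by norm_num)]
      have a1 : (2*s₁ - s₂) + (1/3 : ℝ) * (3 * (s₂ - s₁)) = s₁ := by ring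
      have a2 : (2*s₁ - s₂) + (2/3 : ℝ) * (3 * (s₂ - s₁)) = s₂ := by ring
      rw [a1, a2]
      exact Set.Icc_subset_Icc hs₁.1 hs₂.2
    · rw [image_aff_neg _ (by linarith) (by norm_num)]
      have a1 : (2*s₁ - s₂) + (1/3 : ℝ) * (3 * (s₂ - s₁)) = s₁ := by ring
      have a2 : (2*s₁ - s₂) + (2/3 : ℝ) * (3 * (s₂ - s₁)) = s₂ := by ring
      rw [a1, a2]
      exact Set.Icc_subset_Icc hs₂.1 hs₁.2
  have c₃ : ContinuousOn c (Set.Icc (2/3) 1) := by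
    refine (h1c.comp (by fun_prop) ?_).congr E₃
    rw [Set.mapsTo_iff_image_subset, img₃]
    exact Set.Icc_subset_Icc ht₂.1 le_rfl
  have hset : Set.Icc (0:ℝ) 1
      = (Set.Icc 0 (1/3) ∪ Set.Icc (1/3) (2/3)) ∪ Set.Icc (2/3) 1 := by
    rw [Set.Icc_union_Icc_eq_Icc (by norm_num) (by norm_num),
      Set.Icc_union_Icc_eq_Icc (by norm_num) (by norm_num)]
  have hcont : ContinuousOn c (Set.Icc 0 1) := by
    rw [hset]
    exact contOn_union (isClosed_Icc.union isClosed_Icc) isClosed_Icc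
      (contOn_union isClosed_Icc isClosed_Icc c₁ c₂) c₃
  -- endpoints
  have end0 : c 0 = x₁ := by
    have a1 : (3:ℝ) * 0 * t₁ = 0 := by ring
    simp only [hc, concatGeo]
    rw [if_pos (by norm_num), a1, h10]
  have end1 : c 1 = x₂ := by
    have a1 : t₂ + (3 * (1:ℝ) - 2) * (1 - t₂) = 1 := by ring
    simp only [hc, concatGeo]
    rw [if_neg (by norm_num), if_neg (by norm_num), a1, h11]
  -- arc length
  have hg1 : eVariationOn γ₁ (Set.Icc 0 1) = edist (γ₁ 0) (γ₁ 1) := by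
    rw [h10, h11]; exact h1g
  have hg2 : eVariationOn γ₂ (Set.Icc 0 1) = edist (γ₂ 0) (γ₂ 1) := by
    rw [h20, h21]; exact h2g
  have h01 : (0:ℝ) ∈ Set.Icc (0:ℝ) 1 := ⟨le_rfl, zero_le_one⟩
  have h11' : (1:ℝ) ∈ Set.Icc (0:ℝ) 1 := ⟨zero_le_one, le_rfl⟩
  have first : eVariationOn c (Set.Icc 0 (1/3)) = edist (γ₁ 0) (γ₁ t₁) := by
    rw [eVariationOn.eq_of_eqOn E₁,
      eVariationOn.comp_eq_of_monotoneOn _ _ ((mono_aff 0 q₁).monotoneOn _), img₁]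
    exact subgeo γ₁ hg1 h01 ht₁ ht₁.1
  have third : eVariationOn c (Set.Icc (2/3) 1) = edist (γ₁ t₂) (γ₁ 1) := by
    rw [eVariationOn.eq_of_eqOn E₃,
      eVariationOn.comp_eq_of_monotoneOn _ _ ((mono_aff _ q₃).monotoneOn _), img₃]
    exact subgeo γ₁ hg1 ht₂ h11' ht₂.2
  have mid : eVariationOn c (Set.Icc (1/3) (2/3)) = edist (γ₁ t₁) (γ₁ t₂) := by
    rw [eVariationOn.eq_of_eqOn E₂]
    rcases le_total s₁ s₂ with hss | hss
    · rw [eVariationOn.comp_eq_of_monotoneOn _ _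
        ((mono_aff (2*s₁ - s₂) (by linarith : (0:ℝ) ≤ 3 * (s₂ - s₁))).monotoneOn _),
        image_aff _ (by linarith) (by norm_num)]
      have a1 : (2*s₁ - s₂) + (1/3 : ℝ) * (3 * (s₂ - s₁)) = s₁ := by ring
      have a2 : (2*s₁ - s₂) + (2/3 : ℝ) * (3 * (s₂ - s₁)) = s₂ := by ring
      rw [a1, a2, he₁, he₂]
      exact subgeo γ₂ hg2 hs₁ hs₂ hss
    · rw [eVariationOn.comp_eq_of_antitoneOn _ _
        ((anti_aff (2*s₁ - s₂) (by linarith : 3 * (s₂ - s₁) ≤ 0)).antitoneOn _),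
        image_aff_neg _ (by linarith) (by norm_num)]
      have a1 : (2*s₁ - s₂) + (1/3 : ℝ) * (3 * (s₂ - s₁)) = s₁ := by ring
      have a2 : (2*s₁ - s₂) + (2/3 : ℝ) * (3 * (s₂ - s₁)) = s₂ := by ring
      rw [a1, a2, he₁, he₂, edist_comm]
      exact subgeo γ₂ hg2 hs₂ hs₁ hss
  have total : eVariationOn c (Set.Icc 0 1) = edist x₁ x₂ := by
    have hsum : eVariationOn c (Set.Icc 0 1)
        = eVariationOn c (Set.Icc 0 (1/3)) + eVariationOn c (Set.Icc (1/3) (2/3))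
          + eVariationOn c (Set.Icc (2/3) 1) := by
      rw [split_var c (by norm_num : (0:ℝ) ≤ 1/3) (by norm_num : (1/3:ℝ) ≤ 2/3),
        split_var c (by norm_num : (0:ℝ) ≤ 2/3) (by norm_num : (2/3:ℝ) ≤ 1)]
    have hback : edist x₁ x₂
        = edist (γ₁ 0) (γ₁ t₁) + edist (γ₁ t₁) (γ₁ t₂) + edist (γ₁ t₂) (γ₁ 1) := by
      rw [← subgeo γ₁ hg1 h01 ht₁ ht₁.1, ← subgeo γ₁ hg1 ht₁ ht₂ ht,
        ← subgeo γ₁ hg1 ht₂ h11' ht₂.2,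
        split_var γ₁ ht₁.1 ht, split_var γ₁ (ht₁.1.trans ht) ht₂.2, h1g]
    rw [hsum, first, mid, third, hback]
  exact ⟨hcont, end0, end1, total⟩
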